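/- The full subcategory of the category of Δ-generated topological spaces consisting of the Δ-Hausdorff spaces is reflective: the full inclusion functor from Δ-Hausdorff Δ-generated spaces into Δ-generated spaces has a left adjoint. -/

import Mathlib

/-! The reflection of `X` is its quotient by the intersection of all equivalence relations with
Δ-Hausdorff quotient. This quotient is again Δ-Hausdorff because a sequential space separated by
continuous maps into Δ-Hausdorff spaces is Δ-Hausdorff: if `p tₙ → y` for a path `p`, pass to a
subsequence with `tₙ → a`; for each separating map `g`, the images under `g ∘ p` of small closed
intervals around `a` are closed and eventually contain `g (p tₙ)`, so `g y` lies in every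
neighbourhood of `g (p a)`, and `g y = g (p a)` since Δ-Hausdorff spaces are T₁. -/

open Set Filter Topology

/-- A topological space `X` is *Δ-Hausdorff* if the image of every continuous map
`[0,1] → X` is closed in `X`. -/
def DeltaHausdorff (X : Type*) [TopologicalSpace X] : Prop :=
  ∀ f : C(unitInterval, X), IsClosed (Set.range f)

namespace DeltaHausdorff

variable {X : Type*} [TopologicalSpace X]

lemma t1Space (h : DeltaHausdorff X) : T1Space X := by
  refine ⟨fun x => ?_⟩
  have hx : range (ContinuousMap.const unitInterval x) = {x} := range_const
  exact hx ▸ h (ContinuousMap.const _ x)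

lemma isClosed_image_Icc (h : DeltaHausdorff X) (p : C(unitInterval, X)) {c d : unitInterval}
    (hcd : c ≤ d) : IsClosed (p '' Icc c d) := by
  let σ : C(unitInterval, unitInterval) :=
    ⟨fun u => projIcc c d hcd u, continuous_subtype_val.comp continuous_projIcc⟩
  have hσ : range σ = Icc c d := by
    change range (Subtype.val ∘ projIcc c d hcd) = _
    rw [range_comp, range_projIcc, image_univ, Subtype.range_coe]
  simpa only [ContinuousMap.coe_comp, range_comp, hσ] using h (p.comp σ)

lemma eq_of_tendsto (h : DeltaHausdorff X) (p : C(unitInterval, X)) {ι : Type*} {l : Filter ι}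
    [l.NeBot] {t : ι → unitInterval} {a : unitInterval} {x : X} (ht : Tendsto t l (𝓝 a))
    (hpt : Tendsto (p ∘ t) l (𝓝 x)) : x = p a := by
  have := h.t1Space
  refine (specializes_iff_pure.mpr fun V hV => ?_).eq
  obtain ⟨c, d, had, hcd, hV'⟩ := exists_Icc_mem_subset_of_mem_nhds (p.continuous.continuousAt hV)
  have hx : x ∈ p '' Icc c d :=
    (h.isClosed_image_Icc p (had.1.trans had.2)).mem_of_tendsto hpt
      ((ht.eventually hcd).mono fun n hn => mem_image_of_mem p hn)
  exact image_subset_iff.mpr hV' hx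

end DeltaHausdorff

lemma DeltaHausdorff.of_injective_family {Z : Type*} [TopologicalSpace Z] [SequentialSpace Z]
    {ι : Sort*} {W : ι → Type*} [∀ i, TopologicalSpace (W i)] (hW : ∀ i, DeltaHausdorff (W i))
    (g : ∀ i, C(Z, W i)) (hg : ∀ z z' : Z, (∀ i, g i z = g i z') → z = z') :
    DeltaHausdorff Z := by
  intro p
  refine IsSeqClosed.isClosed fun {z y} hz hzy => ?_
  choose t ht using hz
  obtain rfl : p ∘ t = z := funext ht
  obtain ⟨a, -, φ, hφ, hta⟩ := isCompact_univ.tendsto_subseq (x := t) fun _ => mem_univ _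
  refine ⟨a, hg _ _ fun i => ((hW i).eq_of_tendsto ((g i).comp p) hta ?_).symm⟩
  exact ((g i).continuous.tendsto y).comp (hzy.comp hφ.tendsto_atTop)

lemma DeltaHausdorff.of_injective {Z Y : Type*} [TopologicalSpace Z] [SequentialSpace Z]
    [TopologicalSpace Y] (hY : DeltaHausdorff Y) (g : C(Z, Y)) (hg : Function.Injective g) :
    DeltaHausdorff Z :=
  DeltaHausdorff.of_injective_family (ι := Unit) (fun _ => hY) (fun _ => g)
    fun _ _ h => hg (h ())

def deltaHausdorffSetoid (α : Type*) [TopologicalSpace α] : Setoid α :=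
  sInf {s | DeltaHausdorff (Quotient s)}

section deltaHausdorffSetoid

variable {α : Type*} [TopologicalSpace α] [SequentialSpace α]

lemma deltaHausdorff_quotient_deltaHausdorffSetoid :
    DeltaHausdorff (Quotient (deltaHausdorffSetoid α)) := by
  refine DeltaHausdorff.of_injective_family
    (W := fun s : {s | DeltaHausdorff (Quotient s)} => Quotient s.1) (fun s => s.2)
    (fun s => ⟨Setoid.map_sInf s.2, continuous_id.quotient_map' (sInf_le s.2)⟩) ?_
  rintro ⟨x⟩ ⟨y⟩ h
  exact Setoid.quotient_mk_sInf_eq.mpr fun s hs => Quotient.exact (h ⟨s, hs⟩)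

lemma deltaHausdorffSetoid_le_ker {Y : Type*} [TopologicalSpace Y] (hY : DeltaHausdorff Y)
    (g : C(α, Y)) : deltaHausdorffSetoid α ≤ Setoid.ker g :=
  sInf_le <| hY.of_injective ⟨Setoid.kerLift g, g.continuous.quotient_lift _⟩
    (Setoid.kerLift_injective g)

def deltaHausdorffQuotientLiftEquiv {Y : Type*} [TopologicalSpace Y] (hY : DeltaHausdorff Y) :
    C(Quotient (deltaHausdorffSetoid α), Y) ≃ C(α, Y) where
  toFun h := h.comp ⟨Quotient.mk _, continuous_quot_mk⟩
  invFun g := ⟨Quotient.lift g (deltaHausdorffSetoid_le_ker hY g), g.continuous.quotient_lift _⟩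
  left_inv h := by
    ext ⟨x⟩
    rfl
  right_inv g := rfl

end deltaHausdorffSetoid

open CategoryTheory

/-- The category of Δ-generated topological spaces, as a full subcategory of `TopCat`. -/
abbrev DeltaGenCat : Type 1 :=
  ObjectProperty.FullSubcategory (fun X : TopCat.{0} => DeltaGeneratedSpace X)

abbrev DeltaHausdorffCat : Type 1 :=
  ObjectProperty.FullSubcategory (fun X : DeltaGenCat => DeltaHausdorff X.obj)

def DeltaGenCat.deltaHausdorffReflection (X : DeltaGenCat) : DeltaHausdorffCat :=
  have := X.property
  ⟨⟨TopCat.of (Quotient (deltaHausdorffSetoid X.obj)), inferInstance⟩,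
    deltaHausdorff_quotient_deltaHausdorffSetoid⟩

def DeltaGenCat.deltaHausdorffReflectionHomEquiv (X : DeltaGenCat) (Y : DeltaHausdorffCat) :
    (X.deltaHausdorffReflection ⟶ Y) ≃ (X ⟶ (ObjectProperty.ι _).obj Y) :=
  have := X.property
  (ObjectProperty.fullyFaithfulι _).homEquiv.trans <|
    (ObjectProperty.fullyFaithfulι _).homEquiv.trans <| ConcreteCategory.homEquiv.trans <|
      (deltaHausdorffQuotientLiftEquiv (α := X.obj) Y.property).trans <|
        (ConcreteCategory.homEquiv (X := X.obj) (Y := Y.obj.obj)).symm.trans <|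
          (ObjectProperty.fullyFaithfulι _).homEquiv.symm

/-- The category of Δ-Hausdorff Δ-generated spaces is a reflective (full) subcategory of
the category of Δ-generated spaces: the full inclusion functor has a left adjoint. -/
theorem deltaHausdorff_reflective :
    (ObjectProperty.ι
      (fun X : DeltaGenCat => DeltaHausdorff X.obj)).IsRightAdjoint :=
  (Adjunction.adjunctionOfEquivLeft DeltaGenCat.deltaHausdorffReflectionHomEquiv
    fun _ _ _ _ _ => rfl).isRightAdjoint
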